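/- If all roots of a real polynomial A of degree d are real (A is hyperbolic), then the number of positive roots of A counted with multiplicity equals var(A) exactly. -/

import Mathlib

open Polynomial

/-- Number of sign changes in a list of reals, after discarding zeros. -/
noncomputable def signVar (l : List ℝ) : ℕ :=
  letI := Classical.decEq ℝ
  letI : DecidablePred fun p : ℝ × ℝ => p.1 * p.2 < 0 := fun _ => Classical.dec _
  let l' := l.filter (· ≠ 0)
  (l'.zip l'.tail).countP fun p => p.1 * p.2 < 0

/-- Number of sign variations in the coefficient sequence of a real polynomial. -/
noncomputable def var (A : Polynomial ℝ) : ℕ :=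
  signVar ((List.range (A.natDegree + 1)).map A.coeff)

/-!
Descartes' rule of signs (`Polynomial.roots_countP_pos_le_signVariations`) bounds the number of
positive roots of `A` by its sign variations, and, applied to `A(-X)`, the number of negative
roots by the sign variations of `A(-X)`. On the other hand, two consecutive nonzero coefficients in
degrees `m < n` contribute at most `n - m` sign changes to `A` and `A(-X)` together, so these
two counts add up to at most `deg A - ord₀ A`, where the trailing degree `ord₀ A` is the
multiplicity of the root `0`. If all roots of `A` are real they number `deg A`, so both
Descartes bounds are equalities.
-/

theorem List.zip_reverse_tail_reverse {α : Type*} (l : List α) :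
    l.reverse.zip l.reverse.tail = (l.tail.zip l).reverse := by
  refine List.ext_getElem (by simp) fun i h₁ h₂ ↦ ?_
  simp only [List.length_reverse, List.length_zip, List.length_tail] at h₁ h₂
  simp only [List.getElem_zip, List.getElem_reverse, List.getElem_tail, List.length_zip,
    List.length_tail]
  congr 2 <;> omega

theorem Multiset.card_eq_countP_pos_add_countP_eq_zero_add_countP_neg {α : Type*}
    [Zero α] [LinearOrder α] (s : Multiset α) :
    s.card = s.countP (0 < ·) + s.countP (· = 0) + s.countP (· < 0) := by
  induction s using Multiset.induction_on with
  | empty => simp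
  | cons a s ih =>
    simp only [Multiset.card_cons, Multiset.countP_cons, ih]
    rcases lt_trichotomy a 0 with h | h | h <;> grind

section StrictOrderedRing

variable {R : Type*} [Ring R] [LinearOrder R] [IsStrictOrderedRing R]

theorem mul_neg_iff_sign_ne {a b : R} (ha : a ≠ 0) (hb : b ≠ 0) :
    a * b < 0 ↔ SignType.sign a ≠ SignType.sign b := by
  rw [← sign_eq_neg_one_iff, sign_mul]
  have hsa := sign_ne_zero.2 ha
  have hsb := sign_ne_zero.2 hb
  generalize SignType.sign a = s at *
  generalize SignType.sign b = t at *
  decide +revert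

theorem List.countP_zip_cons_eq_length_destutter'_sub_one {a : R} {l : List R} (ha : a ≠ 0)
    (hl : ∀ x ∈ l, x ≠ 0) :
    ((a :: l).zip l).countP (fun p => p.1 * p.2 < 0) =
      (List.destutter' (· ≠ ·) (SignType.sign a) (l.map SignType.sign)).length - 1 := by
  induction l generalizing a with
  | nil => simp
  | cons b l ih =>
    have hb := hl b (by simp)
    rw [List.zip_cons_cons, List.countP_cons, ih hb (fun x hx ↦ hl x (by simp [hx])),
      List.map_cons, List.destutter'_cons]
    have hlen := List.length_pos_of_ne_nil
      (List.destutter'_ne_nil (R := (· ≠ ·)) (a := SignType.sign b) (l := l.map SignType.sign))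
    by_cases hab : a * b < 0
    · rw [if_pos ((mul_neg_iff_sign_ne ha hb).1 hab)]
      simp only [hab, decide_true, if_true, List.length_cons]
      omega
    · rw [if_neg ((mul_neg_iff_sign_ne ha hb).not.1 hab),
        not_not.1 ((mul_neg_iff_sign_ne ha hb).not.1 hab)]
      simp [hab]

end StrictOrderedRing

/-- The two indicators are the sign changes of `p` and of `p.comp (-X)` between consecutive
nonzero coefficients, of signs `s` and `t`, in degrees `n > m`; for `n = m + 1` at most one
of them occurs. -/
theorem SignType.ite_eq_neg_add_ite_neg_one_pow_mul_le {s t : SignType} (hs : s ≠ 0) {m n : ℕ}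
    (hmn : m < n) :
    (if s = -t then 1 else 0) + (if (-1) ^ n * s = -((-1) ^ m * t) then 1 else 0) ≤ n - m := by
  obtain rfl | hmn := (Nat.succ_le_of_lt hmn).eq_or_lt
  · rw [pow_succ, show m.succ - m = 1 by omega]
    rcases neg_one_pow_eq_or SignType m with h | h <;> rw [h] <;> decide +revert
  · split_ifs <;> omega

namespace Polynomial

section CommRing

variable {R : Type*} [CommRing R]

theorem coeff_comp_neg_X (p : R[X]) (n : ℕ) : (p.comp (-X)).coeff n = (-1) ^ n * p.coeff n := by
  induction p using Polynomial.induction_on' with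
  | add p q hp hq => simp [add_comp, hp, hq, mul_add]
  | monomial k a =>
    rw [← C_mul_X_pow_eq_monomial, mul_comp, C_comp, X_pow_comp, neg_pow, ← mul_assoc,
      show ((-1 : R[X])) ^ k = C ((-1) ^ k) by simp, ← C_mul, coeff_C_mul_X_pow,
      coeff_C_mul_X_pow]
    split_ifs with h <;> simp [h, mul_comm]

theorem natDegree_comp_neg_X (p : R[X]) : (p.comp (-X)).natDegree = p.natDegree :=
  natDegree_eq_of_degree_eq degree_comp_neg_X

theorem eraseLead_comp_neg_X (p : R[X]) : (p.comp (-X)).eraseLead = p.eraseLead.comp (-X) := by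
  ext n
  simp only [eraseLead_coeff, coeff_comp_neg_X, natDegree_comp_neg_X]
  split_ifs <;> simp

end CommRing

theorem natTrailingDegree_le_natTrailingDegree_eraseLead {R : Type*} [Semiring R] {p : R[X]}
    (h : p.eraseLead ≠ 0) : p.natTrailingDegree ≤ p.eraseLead.natTrailingDegree :=
  le_natTrailingDegree h fun m hm ↦ by
    rw [eraseLead_coeff_of_ne _ (hm.trans_le (natTrailingDegree_le_natDegree p)).ne]
    exact coeff_eq_zero_of_lt_natTrailingDegree hm

theorem signVariations_add_signVariations_comp_neg_X_add_natTrailingDegree_le {R : Type*}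
    [CommRing R] [LinearOrder R] [IsStrictOrderedRing R] (p : R[X]) :
    p.signVariations + (p.comp (-X)).signVariations + p.natTrailingDegree ≤ p.natDegree := by
  induction h : p.natDegree using Nat.strong_induction_on generalizing p with
  | _ n ih =>
  subst h
  rcases eq_or_ne p 0 with rfl | hp
  · simp
  have hp' : p.comp (-X) ≠ 0 := comp_neg_X_eq_zero_iff.not.2 hp
  rw [signVariations_eq_eraseLead_add_ite hp, signVariations_eq_eraseLead_add_ite hp',
    eraseLead_comp_neg_X, comp_neg_X_leadingCoeff_eq, comp_neg_X_leadingCoeff_eq,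
    sign_mul, sign_mul, sign_pow, sign_pow, Left.sign_neg, sign_one]
  have hs : SignType.sign p.leadingCoeff ≠ 0 := by simpa using hp
  by_cases hq : p.eraseLead = 0
  · simpa [hq, hs] using natTrailingDegree_le_natDegree p
  have hlt := p.eraseLead_natDegree_lt_or_eraseLead_eq_zero.resolve_right hq
  have hrest := ih _ hlt p.eraseLead rfl
  have htrail := natTrailingDegree_le_natTrailingDegree_eraseLead hq
  have hjump := SignType.ite_eq_neg_add_ite_neg_one_pow_mul_le
    (t := SignType.sign p.eraseLead.leadingCoeff) hs hlt
  omega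

theorem splits_of_forall_im_eq_zero {A : ℝ[X]}
    (h : ∀ z ∈ (A.map (algebraMap ℝ ℂ)).roots, z.im = 0) : A.Splits :=
  Splits.of_splits_map (algebraMap ℝ ℂ) (IsAlgClosed.splits _) fun z hz ↦
    ⟨z.re, Complex.ext (by simp) (by simp [h z hz])⟩

end Polynomial

theorem signVar_reverse (l : List ℝ) : signVar l.reverse = signVar l := by
  unfold signVar
  simp only [List.filter_reverse]
  rw [List.zip_reverse_tail_reverse, List.countP_reverse, ← List.zip_swap, List.countP_map]
  congr 1
  funext p
  simp [mul_comm]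

theorem signVar_eq_length_destutter_sub_one (l : List ℝ) :
    signVar l = (((l.map SignType.sign).filter (· ≠ 0)).destutter (· ≠ ·)).length - 1 := by
  have hfilter : (l.map SignType.sign).filter (· ≠ 0) = (l.filter (· ≠ 0)).map SignType.sign := by
    simp [List.filter_map, Function.comp_def]
  unfold signVar
  rw [hfilter]
  have hne : ∀ x ∈ l.filter (· ≠ 0), x ≠ 0 := by simp
  generalize l.filter (· ≠ 0) = m at hne ⊢
  cases m with
  | nil => simp
  | cons a m =>
    rw [List.map_cons, List.destutter_cons', ← List.countP_zip_cons_eq_length_destutter'_sub_one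
      (hne a (by simp)) (fun x hx ↦ hne x (by simp [hx]))]
    rfl

theorem var_eq_signVariations (P : ℝ[X]) : var P = P.signVariations := by
  rcases eq_or_ne P 0 with rfl | hP
  · simp [var, signVar]
  rw [signVariations, coeffList, withBotSucc_degree_eq_natDegree_add_one hP, var,
    ← signVar_reverse, signVar_eq_length_destutter_sub_one]
  simp only [List.map_reverse]

theorem descartes_exact_hyperbolic_general (A : Polynomial ℝ)
    (hreal : ∀ z ∈ (A.map (algebraMap ℝ ℂ)).roots, z.im = 0) :
    (A.roots.filter fun x => 0 < x).card = var A := by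
  have hcard : A.roots.card = A.natDegree :=
    splits_iff_card_roots.1 (splits_of_forall_im_eq_zero hreal)
  have hpos := roots_countP_pos_le_signVariations A
  have hneg : A.roots.countP (· < 0) ≤ (A.comp (-X)).signVariations := by
    have := roots_countP_pos_le_signVariations (A.comp (-X))
    rw [roots_comp_neg_X, Multiset.countP_map, ← Multiset.countP_eq_card_filter] at this
    simpa only [Left.neg_pos_iff] using this
  have hzero : A.roots.countP (· = 0) = A.natTrailingDegree := by
    rw [Multiset.countP_eq_card_filter, Multiset.filter_eq', Multiset.card_replicate, count_roots,
      rootMultiplicity_eq_natTrailingDegree']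
  have hsum := signVariations_add_signVariations_comp_neg_X_add_natTrailingDegree_le A
  have hpartition := A.roots.card_eq_countP_pos_add_countP_eq_zero_add_countP_neg
  rw [← Multiset.countP_eq_card_filter, var_eq_signVariations]
  omega

theorem descartes_exact_hyperbolic (A : Polynomial ℝ) (hA : A ≠ 0)
    (hreal : ∀ z ∈ (A.map (algebraMap ℝ ℂ)).roots, z.im = 0) :
    (A.roots.filter fun x => 0 < x).card = var A :=
  descartes_exact_hyperbolic_general A hreal
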